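/- arXiv:1504.02052 — 2 statements merged into one kernel-verified Lean document; each statement's English description precedes it below -/
import Mathlib

section
/- Under a lex-optimal allocation with at least two distinct exchange ratio levels, the set L_1 of nodes with the minimum exchange ratio is an independent set in the graph G (no two nodes of L_1 are adjacent). -/
/-!
If a node `u` is adjacent to a node `v` of minimum exchange ratio `l₁` and still sends
something to a node `w` above `l₁`, shifting a little of that flow from `w` to `v` lifts `v`
off the level `l₁` without bringing `w` down to it: one fewer node sits at `l₁`, a
lexicographic improvement. So at a lex-optimal allocation the set `T` of minimum-ratio nodes
with a minimum-ratio neighbour sends its whole endowment inside `T`, and therefore receives at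
least `∑_T D`. Yet each node of `T` receives `l₁ D`, and `l₁ < 1` as soon as the ratios are not
all equal, because the total received equals the total endowment.
-/

open Finset

noncomputable section

variable {V : Type*}

/-- An allocation: nonnegative, supported on edges, each node distributes its full endowment. -/
def IsAlloc [Fintype V] [DecidableEq V] (G : SimpleGraph V) [DecidableRel G.Adj]
    (D : V → ℝ) (d : V → V → ℝ) : Prop :=
  (∀ i j, 0 ≤ d i j) ∧ (∀ i j, ¬ G.Adj i j → d i j = 0) ∧
  (∀ i, ∑ j ∈ G.neighborFinset i, d i j = D i)

/-- Received resource of node `i`. -/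
def recv [Fintype V] [DecidableEq V] (G : SimpleGraph V) [DecidableRel G.Adj]
    (d : V → V → ℝ) (i : V) : ℝ := ∑ j ∈ G.neighborFinset i, d j i

/-- Exchange ratio of node `i`. -/
def ratio [Fintype V] [DecidableEq V] (G : SimpleGraph V) [DecidableRel G.Adj]
    (D : V → ℝ) (d : V → V → ℝ) (i : V) : ℝ := recv G d i / D i

/-- Total resource flowing into `S` from outside. -/
def inFlow [Fintype V] [DecidableEq V] (G : SimpleGraph V) [DecidableRel G.Adj]
    (d : V → V → ℝ) (S : Finset V) : ℝ :=
  ∑ i ∈ S, ∑ j ∈ G.neighborFinset i \ S, d j i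

/-- Total resource flowing out of `S`. -/
def outFlow [Fintype V] [DecidableEq V] (G : SimpleGraph V) [DecidableRel G.Adj]
    (d : V → V → ℝ) (S : Finset V) : ℝ :=
  ∑ i ∈ S, ∑ j ∈ G.neighborFinset i \ S, d i j

/-- Sorted (non-decreasing) list of exchange ratios. -/
def sortedRatios [Fintype V] [DecidableEq V] (G : SimpleGraph V) [DecidableRel G.Adj]
    (D : V → ℝ) (d : V → V → ℝ) : List ℝ :=
  (Finset.univ.val.map (ratio G D d)).sort (· ≤ ·)

/-- Lexicographic optimality: no allocation gives a lexicographically larger sorted ratio vector. -/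
def LexOpt [Fintype V] [DecidableEq V] (G : SimpleGraph V) [DecidableRel G.Adj]
    (D : V → ℝ) (d : V → V → ℝ) : Prop :=
  IsAlloc G D d ∧ ∀ d', IsAlloc G D d' →
    ¬ List.Lex (· < ·) (sortedRatios G D d) (sortedRatios G D d')

/-- Minimum exchange ratio. -/
def minRatio [Fintype V] [Nonempty V] [DecidableEq V] (G : SimpleGraph V) [DecidableRel G.Adj]
    (D : V → ℝ) (d : V → V → ℝ) : ℝ := Finset.univ.inf' Finset.univ_nonempty (ratio G D d)

/-- Maximum exchange ratio. -/
def maxRatio [Fintype V] [Nonempty V] [DecidableEq V] (G : SimpleGraph V) [DecidableRel G.Adj]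
    (D : V → ℝ) (d : V → V → ℝ) : ℝ := Finset.univ.sup' Finset.univ_nonempty (ratio G D d)

/-- The set `L₁` of nodes attaining the minimum exchange ratio. -/
def minSet [Fintype V] [Nonempty V] [DecidableEq V] (G : SimpleGraph V) [DecidableRel G.Adj]
    (D : V → ℝ) (d : V → V → ℝ) : Finset V :=
  Finset.univ.filter (fun i => ratio G D d i = minRatio G D d)

/-- The set `L_K` of nodes attaining the maximum exchange ratio. -/
def maxSet [Fintype V] [Nonempty V] [DecidableEq V] (G : SimpleGraph V) [DecidableRel G.Adj]
    (D : V → ℝ) (d : V → V → ℝ) : Finset V :=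
  Finset.univ.filter (fun i => ratio G D d i = maxRatio G D d)

/-- External neighborhood of a set of nodes. -/
def extNbhd [Fintype V] [DecidableEq V] (G : SimpleGraph V) [DecidableRel G.Adj]
    (S : Finset V) : Finset V := (S.biUnion fun i => G.neighborFinset i) \ S

theorem List.lex_lt_of_count_lt {α : Type*} [LinearOrder α] {c : α} :
    ∀ {l₁ l₂ : List α}, l₁.Pairwise (· ≤ ·) → l₁.length = l₂.length →
      (∀ x ∈ l₁, c ≤ x) → (∀ x ∈ l₂, c ≤ x) → l₂.count c < l₁.count c →
      List.Lex (· < ·) l₁ l₂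
  | [], _, _, _, _, _, hcount => by simp at hcount
  | _ :: _, [], _, hlen, _, _, _ => by simp at hlen
  | a :: t₁, b :: t₂, hs, hlen, h₁, h₂, hcount => by
    -- `c` occurs in the sorted list `l₁` and bounds it below, so it is its head.
    have hac : a = c := by
      have hc : c ∈ a :: t₁ := List.count_pos_iff.mp (by omega)
      rcases List.mem_cons.mp hc with h | h
      · exact h.symm
      · exact le_antisymm (List.rel_of_pairwise_cons hs h) (h₁ a (by simp))
    subst hac
    rcases (h₂ b (by simp)).lt_or_eq with hb | rfl
    · exact List.Lex.rel hb
    · refine List.Lex.cons (List.lex_lt_of_count_lt hs.of_cons (by simpa using hlen)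
        (fun x hx => h₁ x (by simp [hx])) (fun x hx => h₂ x (by simp [hx])) ?_)
      simpa [List.count_cons] using hcount

section Allocation

variable [Fintype V] [DecidableEq V] {G : SimpleGraph V} [DecidableRel G.Adj]
  {D : V → ℝ} {d : V → V → ℝ}

theorem IsAlloc.sum_eq (hd : IsAlloc G D d) (i : V) : ∑ j, d i j = D i := by
  rw [← hd.2.2 i]
  exact (Finset.sum_subset (subset_univ _) fun j _ hj =>
    hd.2.1 i j (by simpa using hj)).symm

theorem IsAlloc.recv_eq (hd : IsAlloc G D d) (i : V) : recv G d i = ∑ j, d j i :=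
  Finset.sum_subset (subset_univ _) fun j _ hj =>
    hd.2.1 j i fun h => hj (by simpa using h.symm)

theorem IsAlloc.sum_recv (hd : IsAlloc G D d) : ∑ i, recv G d i = ∑ i, D i := by
  simp only [hd.recv_eq, ← hd.sum_eq]
  exact Finset.sum_comm

theorem IsAlloc.sum_le_sum_recv_of_closed (hd : IsAlloc G D d) {T : Finset V}
    (hT : ∀ x ∈ T, ∀ y ∉ T, d x y = 0) : ∑ x ∈ T, D x ≤ ∑ x ∈ T, recv G d x :=
  calc ∑ x ∈ T, D x = ∑ x ∈ T, ∑ y ∈ T, d x y := by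
        refine Finset.sum_congr rfl fun x hx => ?_
        rw [← hd.sum_eq]
        exact (Finset.sum_subset (subset_univ _) fun y _ hy => hT x hx y hy).symm
    _ = ∑ y ∈ T, ∑ x ∈ T, d x y := Finset.sum_comm
    _ ≤ ∑ y ∈ T, ∑ x, d x y := Finset.sum_le_sum fun y _ =>
        Finset.sum_le_sum_of_subset_of_nonneg (subset_univ _) fun x _ _ => hd.1 x y
    _ = ∑ x ∈ T, recv G d x := by simp only [hd.recv_eq]

theorem recv_eq_ratio_mul (hD : ∀ i, 0 < D i) (i : V) : recv G d i = ratio G D d i * D i :=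
  (div_mul_cancel₀ _ (hD i).ne').symm

theorem IsAlloc.exists_ratio_lt_one (hd : IsAlloc G D d) (hD : ∀ i, 0 < D i)
    (hK : ∃ i j, ratio G D d i ≠ ratio G D d j) : ∃ i, ratio G D d i < 1 := by
  by_contra! h
  have hle : ∀ i ∈ univ, D i ≤ recv G d i := fun i _ => by
    rw [recv_eq_ratio_mul hD]; nlinarith [h i, hD i]
  have heq := (Finset.sum_eq_sum_iff_of_le hle).mp hd.sum_recv.symm
  have hone : ∀ i, ratio G D d i = 1 := fun i => by
    rw [ratio, ← heq i (mem_univ i), div_self (hD i).ne']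
  obtain ⟨i, j, hij⟩ := hK
  exact hij (by rw [hone, hone])

end Allocation

section SortedRatios

variable [Fintype V] [DecidableEq V] (G : SimpleGraph V) [DecidableRel G.Adj]
  (D : V → ℝ) (d : V → V → ℝ)

theorem sortedRatios_pairwise : (sortedRatios G D d).Pairwise (· ≤ ·) :=
  Multiset.pairwise_sort _ _

theorem length_sortedRatios : (sortedRatios G D d).length = Fintype.card V := by
  simp [sortedRatios]

theorem count_sortedRatios (c : ℝ) :
    (sortedRatios G D d).count c = #{i | ratio G D d i = c} := by
  rw [sortedRatios, ← Multiset.coe_count, Multiset.sort_eq, Multiset.count_map]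
  simp only [eq_comm]
  rfl

theorem exists_ratio_eq_of_mem_sortedRatios {x : ℝ} (hx : x ∈ sortedRatios G D d) :
    ∃ i, ratio G D d i = x := by
  simpa using (Multiset.mem_sort _).mp hx

variable {G D d}

theorem lex_sortedRatios_of_card_lt {d' : V → V → ℝ} {c : ℝ} (h : ∀ i, c ≤ ratio G D d i)
    (h' : ∀ i, c ≤ ratio G D d' i)
    (hcard : #{i | ratio G D d' i = c} < #{i | ratio G D d i = c}) :
    List.Lex (· < ·) (sortedRatios G D d) (sortedRatios G D d') := by
  refine List.lex_lt_of_count_lt (sortedRatios_pairwise G D d)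
    (by rw [length_sortedRatios, length_sortedRatios]) ?_ ?_
    (by rwa [count_sortedRatios, count_sortedRatios])
  · intro x hx
    obtain ⟨i, rfl⟩ := exists_ratio_eq_of_mem_sortedRatios G D d hx
    exact h i
  · intro x hx
    obtain ⟨i, rfl⟩ := exists_ratio_eq_of_mem_sortedRatios G D d' hx
    exact h' i

end SortedRatios

def transfer [DecidableEq V] (d : V → V → ℝ) (u v w : V) (ε : ℝ) : V → V → ℝ := fun p q =>
  d p q + if p = u then (if q = v then ε else 0) - (if q = w then ε else 0) else 0

section Transfer

variable [Fintype V] [DecidableEq V] {G : SimpleGraph V} [DecidableRel G.Adj]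
  {D : V → ℝ} {d : V → V → ℝ} {u v w : V} {ε : ℝ}

theorem isAlloc_transfer (hd : IsAlloc G D d) (huv : G.Adj u v) (huw : G.Adj u w)
    (hε : 0 ≤ ε) (hεw : ε ≤ d u w) : IsAlloc G D (transfer d u v w ε) := by
  refine ⟨fun p q => ?_, fun p q hpq => ?_, fun p => ?_⟩
  · unfold transfer
    split_ifs <;> subst_vars <;> linarith [hd.1 p q]
  · unfold transfer
    split_ifs <;> subst_vars <;> simp_all [hd.2.1 p q hpq]
  · unfold transfer
    rw [Finset.sum_add_distrib, hd.2.2 p]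
    split_ifs with hp
    · subst hp
      simp [Finset.sum_sub_distrib, huv, huw]
    · simp

theorem recv_transfer (huv : G.Adj u v) (huw : G.Adj u w) (x : V) :
    recv G (transfer d u v w ε) x
      = recv G d x + ((if x = v then ε else 0) - (if x = w then ε else 0)) := by
  unfold recv transfer
  rw [Finset.sum_add_distrib, Finset.sum_ite_eq']
  split_ifs <;> subst_vars <;> simp_all [G.adj_comm]

theorem ratio_transfer (huv : G.Adj u v) (huw : G.Adj u w) (x : V) :
    ratio G D (transfer d u v w ε) x
      = ratio G D d x + ((if x = v then ε / D v else 0) - (if x = w then ε / D w else 0)) := by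
  unfold ratio
  rw [recv_transfer huv huw]
  split_ifs <;> subst_vars <;> ring

theorem IsAlloc.exists_lex_improvement (hd : IsAlloc G D d) (hD : ∀ i, 0 < D i) {c : ℝ}
    (hc : ∀ i, c ≤ ratio G D d i) (huv : G.Adj u v) (huw : G.Adj u w) (hduw : 0 < d u w)
    (hv : ratio G D d v = c) (hw : c < ratio G D d w) :
    ∃ d', IsAlloc G D d' ∧ List.Lex (· < ·) (sortedRatios G D d) (sortedRatios G D d') := by
  have hvw : v ≠ w := by rintro rfl; linarith
  set ε := min (d u w) (D w * (ratio G D d w - c) / 2)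
  have hgap : 0 < D w * (ratio G D d w - c) := mul_pos (hD w) (sub_pos.mpr hw)
  have hε : 0 < ε := lt_min hduw (by linarith)
  have hεv_pos : 0 < ε / D v := div_pos hε (hD v)
  have hεw : ε / D w < ratio G D d w - c := by
    rw [div_lt_iff₀ (hD w)]
    linarith [min_le_right (d u w) (D w * (ratio G D d w - c) / 2)]
  have hεw_pos : 0 < ε / D w := div_pos hε (hD w)
  have hratio := ratio_transfer (D := D) (d := d) (ε := ε) huv huw
  have hlow : ∀ x, c ≤ ratio G D (transfer d u v w ε) x := fun x => by
    rw [hratio]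
    split_ifs <;> subst_vars <;> linarith [hc x]
  have hsub : ({x | ratio G D (transfer d u v w ε) x = c} : Finset V)
      ⊆ ({x | ratio G D d x = c} : Finset V).erase v := by
    intro x hx
    simp only [mem_filter, mem_univ, true_and, mem_erase] at hx ⊢
    rw [hratio] at hx
    have hxv : x ≠ v := by rintro rfl; simp [hvw] at hx; linarith
    have hxw : x ≠ w := by rintro rfl; simp [hvw.symm] at hx; linarith
    simpa [hxv, hxw] using hx
  refine ⟨_, isAlloc_transfer hd huv huw hε.le (min_le_left _ _),
    lex_sortedRatios_of_card_lt hc hlow ?_⟩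
  calc _ ≤ #(({x | ratio G D d x = c} : Finset V).erase v) := card_le_card hsub
    _ < _ := card_erase_lt_of_mem (by simpa using hv)

end Transfer

section MinSet

variable [Fintype V] [Nonempty V] [DecidableEq V] {G : SimpleGraph V} [DecidableRel G.Adj]
  {D : V → ℝ} {d : V → V → ℝ}

theorem minRatio_le (i : V) : minRatio G D d ≤ ratio G D d i :=
  inf'_le _ (mem_univ i)

theorem mem_minSet {i : V} : i ∈ minSet G D d ↔ ratio G D d i = minRatio G D d := by
  simp [minSet]

theorem LexOpt.eq_zero_of_adj_mem_minSet (hopt : LexOpt G D d) (hD : ∀ i, 0 < D i)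
    {u v w : V} (huv : G.Adj u v) (hv : v ∈ minSet G D d) (hw : w ∉ minSet G D d) :
    d u w = 0 := by
  by_contra hduw
  have huw : G.Adj u w := by_contra fun h => hduw (hopt.1.2.1 u w h)
  obtain ⟨d', hd', hlex⟩ := hopt.1.exists_lex_improvement hD minRatio_le huv huw
    ((hopt.1.1 u w).lt_of_ne' hduw) (mem_minSet.mp hv)
    ((minRatio_le w).lt_of_ne' (mt mem_minSet.mpr hw))
  exact hopt.2 d' hd' hlex

end MinSet

theorem stmt7_general [Fintype V] [Nonempty V] [DecidableEq V] (G : SimpleGraph V) [DecidableRel G.Adj]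
    (D : V → ℝ) (hD : ∀ i, 0 < D i) (d : V → V → ℝ)
    (hopt : LexOpt G D d) (hK : ∃ i j, ratio G D d i ≠ ratio G D d j) :
    ∀ i ∈ minSet G D d, ∀ j ∈ minSet G D d, ¬ G.Adj i j := by
  intro i hi j hj hij
  set T : Finset V := {x ∈ minSet G D d | ∃ y ∈ minSet G D d, G.Adj x y}
  have hclosed : ∀ x ∈ T, ∀ y ∉ T, d x y = 0 := by
    intro x hx y hy
    simp only [T, mem_filter, not_and] at hx hy
    by_cases hyS : y ∈ minSet G D d
    · exact hopt.1.2.1 x y fun hxy => hy hyS ⟨x, hx.1, hxy.symm⟩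
    · obtain ⟨z, hz, hxz⟩ := hx.2
      exact hopt.eq_zero_of_adj_mem_minSet hD hxz hz hyS
  have hrecv : ∑ x ∈ T, recv G d x = minRatio G D d * ∑ x ∈ T, D x := by
    rw [mul_sum]
    exact sum_congr rfl fun x hx => by
      rw [recv_eq_ratio_mul hD, mem_minSet.mp (mem_filter.mp hx).1]
  have hpos : 0 < ∑ x ∈ T, D x :=
    sum_pos (fun x _ => hD x) ⟨i, mem_filter.mpr ⟨hi, j, hj, hij⟩⟩
  obtain ⟨k, hk⟩ := hopt.1.exists_ratio_lt_one hD hK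
  nlinarith [hopt.1.sum_le_sum_recv_of_closed hclosed, minRatio_le (G := G) (D := D) (d := d) k]

theorem stmt7 [Fintype V] [Nonempty V] [DecidableEq V] (G : SimpleGraph V) [DecidableRel G.Adj]
    (hconn : G.Connected) (D : V → ℝ) (hD : ∀ i, 0 < D i) (d : V → V → ℝ)
    (hopt : LexOpt G D d) (hK : ∃ i j, ratio G D d i ≠ ratio G D d j) :
    ∀ i ∈ minSet G D d, ∀ j ∈ minSet G D d, ¬ G.Adj i j :=
  stmt7_general G D hD d hopt hK
end
end

section
/- Under a lex-optimal allocation with at least two distinct exchange ratio levels, the total resource received by the minimum-ratio nodes equals the total endowment of the maximum-ratio nodes: ∑_{i∈L_1} r_i = ∑_{i∈L_K} D_i. -/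
/-!
Lex-optimality forces every node `w` to send only to its neighbours of least ratio; call that
ratio `φ w`. Along every edge carrying flow, `ratio · φ` cannot increase, and at a node where it is
extremal the flow swaps the pair `(ratio, φ)`. So the nodes with pair `(r, q)` and those with pair
`(q, r)` exchange only with each other, and conservation of flow between the two classes gives
`r q ≥ 1` at the minimum of `ratio · φ` and `r q ≤ 1` at its maximum. Hence `ratio x * φ x = 1`
everywhere and `minRatio * maxRatio = 1`: the maximum-ratio nodes send only to minimum-ratio nodes,
and are the only nodes that send to them.
-/

open Finset

noncomputable section

variable {V : Type*}

theorem Multiset.sort_add_lex_sort_add {α : Type*} [LinearOrder α] (t : Multiset α)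
    {w u : Multiset α} {q : α} (hq : q ∈ w) (hw : ∀ x ∈ w, q ≤ x) (hu : ∀ x ∈ u, q < x)
    (hu₀ : u ≠ 0) :
    List.Lex (· < ·) ((t + w).sort (· ≤ ·)) ((t + u).sort (· ≤ ·)) := by
  induction t using Multiset.strongInductionOn with | ih t ih => ?_
  by_cases hlow : ∃ m ∈ t, m ≤ q
  · obtain ⟨m₀, hm₀t, hm₀q⟩ := hlow
    obtain ⟨m, hmt, hmin⟩ := t.toFinset.exists_min_image id ⟨m₀, mem_toFinset.2 hm₀t⟩
    rw [mem_toFinset] at hmt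
    have hmq : m ≤ q := (hmin m₀ (mem_toFinset.2 hm₀t)).trans hm₀q
    obtain ⟨t', rfl⟩ := exists_cons_of_mem hmt
    have hmt' : ∀ x ∈ t', m ≤ x := fun x hx => hmin x (mem_toFinset.2 (mem_cons_of_mem hx))
    rw [cons_add, cons_add, sort_cons, sort_cons]
    · exact List.Lex.cons (ih t' (lt_cons_self _ _))
    · simp only [mem_add]
      rintro x (hx | hx)
      exacts [hmt' x hx, hmq.trans (hu x hx).le]
    · simp only [mem_add]
      rintro x (hx | hx)
      exacts [hmt' x hx, hmq.trans (hw x hx)]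
  · push Not at hlow
    obtain ⟨x, hx⟩ := exists_mem_of_ne_zero hu₀
    obtain ⟨b, l, hbl⟩ := List.exists_cons_of_ne_nil
      (List.ne_nil_of_mem ((mem_sort (· ≤ ·)).2 (mem_add.2 (Or.inr hx))))
    have hb : b ∈ t + u := by rw [← mem_sort (· ≤ ·), hbl]; exact List.mem_cons_self
    rw [← cons_erase hq, add_cons, sort_cons, hbl]
    · refine List.Lex.rel ?_
      rcases mem_add.1 hb with hb | hb
      exacts [hlow b hb, hu b hb]
    · simp only [mem_add]
      rintro x (hx | hx)
      exacts [(hlow x hx).le, hw x (mem_of_mem_erase hx)]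

theorem sort_map_lex_sort_map {ι α : Type*} [Fintype ι] [LinearOrder α] {f g : ι → α}
    (S : Finset ι) {z : ι} (hz : z ∈ S) (hfg : ∀ i ∉ S, f i = g i) (hf : ∀ i ∈ S, f z ≤ f i)
    (hg : ∀ i ∈ S, f z < g i) :
    List.Lex (· < ·) ((univ.val.map f).sort (· ≤ ·)) ((univ.val.map g).sort (· ≤ ·)) := by
  classical
  rw [← Multiset.filter_add_not (· ∈ S) univ.val, Multiset.map_add, Multiset.map_add, add_comm,
    add_comm (Multiset.map g _),
    Multiset.map_congr rfl fun i hi => hfg i (Multiset.of_mem_filter (p := (· ∉ S)) hi)]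
  refine Multiset.sort_add_lex_sort_add _ (q := f z) ?_ ?_ ?_ ?_ <;> simp_all
  exacts [⟨z, hz, rfl⟩, ⟨z, hz⟩]

section Allocation

variable [Fintype V] [DecidableEq V] {G : SimpleGraph V} [DecidableRel G.Adj] {D : V → ℝ}
  {d : V → V → ℝ}

namespace IsAlloc

theorem adj_of_pos (h : IsAlloc G D d) {x y : V} (hxy : 0 < d x y) : G.Adj x y :=
  not_not.1 fun hn => hxy.ne' (h.2.1 x y hn)

theorem sum_eq_s11 (h : IsAlloc G D d) (x : V) : ∑ y, d x y = D x := by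
  rw [← h.2.2 x]
  refine (sum_subset (subset_univ _) fun y _ hy => h.2.1 x y ?_).symm
  rwa [← SimpleGraph.mem_neighborFinset]

theorem recv_eq_sum (h : IsAlloc G D d) (y : V) : recv G d y = ∑ x, d x y := by
  refine sum_subset (subset_univ _) fun x _ hx => h.2.1 x y ?_
  rwa [G.adj_comm, ← SimpleGraph.mem_neighborFinset]

theorem ratio_nonneg (h : IsAlloc G D d) (hD : ∀ i, 0 < D i) (y : V) : 0 ≤ ratio G D d y :=
  div_nonneg (sum_nonneg fun x _ => h.1 x y) (hD y).le

theorem exists_pos (h : IsAlloc G D d) (hD : ∀ i, 0 < D i) (x : V) : ∃ y, 0 < d x y := by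
  by_contra! hx
  have : ∑ y, d x y = 0 := sum_eq_zero fun y _ => (hx y).antisymm (h.1 x y)
  exact (hD x).ne' (h.sum_eq_s11 x ▸ this)

theorem ratio_pos (h : IsAlloc G D d) (hD : ∀ i, 0 < D i) {x y : V} (hxy : 0 < d x y) :
    0 < ratio G D d y := by
  refine div_pos ?_ (hD y)
  rw [h.recv_eq_sum]
  exact hxy.trans_le (single_le_sum (fun x _ => h.1 x y) (mem_univ x))

theorem sum_le_sum_recv (h : IsAlloc G D d) {A B : Finset V}
    (hAB : ∀ x ∈ A, ∀ y, 0 < d x y → y ∈ B) : ∑ x ∈ A, D x ≤ ∑ y ∈ B, recv G d y :=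
  calc ∑ x ∈ A, D x = ∑ x ∈ A, ∑ y ∈ B, d x y := by
        refine sum_congr rfl fun x hx => ?_
        rw [← h.sum_eq_s11 x]
        refine (sum_subset (subset_univ B) fun y _ hy => ?_).symm
        exact (h.1 x y).eq_or_lt.resolve_right (mt (hAB x hx y) hy) |>.symm
    _ = ∑ y ∈ B, ∑ x ∈ A, d x y := sum_comm
    _ ≤ ∑ y ∈ B, recv G d y := sum_le_sum fun y _ => h.recv_eq_sum y ▸
        sum_le_sum_of_subset_of_nonneg (subset_univ A) fun x _ _ => h.1 x y

theorem sum_recv_le_sum (h : IsAlloc G D d) {A B : Finset V}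
    (hBA : ∀ y ∈ A, ∀ x, 0 < d x y → x ∈ B) : ∑ y ∈ A, recv G d y ≤ ∑ x ∈ B, D x :=
  calc ∑ y ∈ A, recv G d y = ∑ y ∈ A, ∑ x ∈ B, d x y := by
        refine sum_congr rfl fun y hy => ?_
        rw [h.recv_eq_sum y]
        refine (sum_subset (subset_univ B) fun x _ hx => ?_).symm
        exact (h.1 x y).eq_or_lt.resolve_right (mt (hBA y hy x) hx) |>.symm
    _ = ∑ x ∈ B, ∑ y ∈ A, d x y := sum_comm
    _ ≤ ∑ x ∈ B, D x := sum_le_sum fun x _ => h.sum_eq_s11 x ▸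
        sum_le_sum_of_subset_of_nonneg (subset_univ A) fun y _ _ => h.1 x y

end IsAlloc

theorem sum_recv_eq_mul_sum (hD : ∀ i, 0 < D i) {S : Finset V} {r : ℝ}
    (hS : ∀ i ∈ S, ratio G D d i = r) : ∑ i ∈ S, recv G d i = r * ∑ i ∈ S, D i := by
  rw [mul_sum]
  refine sum_congr rfl fun i hi => ?_
  rw [← hS i hi, ratio, div_mul_cancel₀ _ (hD i).ne']

theorem IsAlloc.one_le_mul_of_sends_into (h : IsAlloc G D d) (hD : ∀ i, 0 < D i)
    {A B : Finset V} {r q : ℝ} (hq : 0 ≤ q) (hA : A.Nonempty) (hAr : ∀ x ∈ A, ratio G D d x = r)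
    (hBq : ∀ x ∈ B, ratio G D d x = q) (hAB : ∀ x ∈ A, ∀ y, 0 < d x y → y ∈ B)
    (hBA : ∀ x ∈ B, ∀ y, 0 < d x y → y ∈ A) : 1 ≤ r * q := by
  have hApos : 0 < ∑ x ∈ A, D x := sum_pos (fun i _ => hD i) hA
  have h₁ := h.sum_le_sum_recv hAB
  have h₂ := h.sum_le_sum_recv hBA
  rw [sum_recv_eq_mul_sum hD hBq] at h₁
  rw [sum_recv_eq_mul_sum hD hAr] at h₂
  nlinarith [mul_le_mul_of_nonneg_left h₂ hq]

theorem IsAlloc.mul_le_one_of_receives_from (h : IsAlloc G D d) (hD : ∀ i, 0 < D i)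
    {A B : Finset V} {r q : ℝ} (hq : 0 ≤ q) (hA : A.Nonempty) (hAr : ∀ x ∈ A, ratio G D d x = r)
    (hBq : ∀ x ∈ B, ratio G D d x = q) (hAB : ∀ y ∈ A, ∀ x, 0 < d x y → x ∈ B)
    (hBA : ∀ y ∈ B, ∀ x, 0 < d x y → x ∈ A) : r * q ≤ 1 := by
  have hApos : 0 < ∑ x ∈ A, D x := sum_pos (fun i _ => hD i) hA
  have h₁ := h.sum_recv_le_sum hAB
  have h₂ := h.sum_recv_le_sum hBA
  rw [sum_recv_eq_mul_sum hD hAr] at h₁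
  rw [sum_recv_eq_mul_sum hD hBq] at h₂
  nlinarith [mul_le_mul_of_nonneg_left h₁ hq]

def redirect (d : V → V → ℝ) (w y z : V) (ε : ℝ) : V → V → ℝ :=
  d + Pi.single w (Pi.single z ε - Pi.single y ε)

theorem isAlloc_redirect (h : IsAlloc G D d) {w y z : V} {ε : ℝ} (hy : G.Adj w y)
    (hz : G.Adj w z) (hε : 0 ≤ ε) (hεy : ε ≤ d w y) : IsAlloc G D (redirect d w y z ε) := by
  refine ⟨fun u v => ?_, fun u v huv => ?_, fun u => ?_⟩
  · rcases eq_or_ne u w with rfl | hu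
    · have := h.1 u v
      by_cases hvz : v = z <;> by_cases hvy : v = y <;> simp_all [redirect]
      linarith
    · simpa [redirect, hu] using h.1 u v
  · rcases eq_or_ne u w with rfl | hu
    · have hvy : v ≠ y := by rintro rfl; exact huv hy
      have hvz : v ≠ z := by rintro rfl; exact huv hz
      simp [redirect, hvy, hvz, h.2.1 u v huv]
    · simp [redirect, hu, h.2.1 u v huv]
  · rcases eq_or_ne u w with rfl | hu
    · simp [redirect, sum_add_distrib, h.2.2, hy, hz]
    · simp [redirect, hu, h.2.2]

theorem ratio_redirect (h : IsAlloc G D d) {w y z : V} {ε : ℝ} (hy : G.Adj w y)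
    (hz : G.Adj w z) (hε : 0 ≤ ε) (hεy : ε ≤ d w y) (v : V) :
    ratio G D (redirect d w y z ε) v =
      ratio G D d v + (Pi.single z ε - Pi.single y ε : V → ℝ) v / D v := by
  rw [ratio, ratio, (isAlloc_redirect h hy hz hε hεy).recv_eq_sum, h.recv_eq_sum, ← add_div]
  simp only [redirect, Pi.add_apply, sum_add_distrib, ← Finset.sum_apply v, sum_pi_single',
    mem_univ, if_true]

end Allocation

section LexOpt

variable [Fintype V] [DecidableEq V] {G : SimpleGraph V} [DecidableRel G.Adj] {D : V → ℝ}
  {d : V → V → ℝ}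

theorem LexOpt.ratio_le_of_pos (hopt : LexOpt G D d) (hD : ∀ i, 0 < D i) {w y z : V}
    (hz : G.Adj w z) (hwy : 0 < d w y) : ratio G D d y ≤ ratio G D d z := by
  by_contra! hlt
  -- Moving a little of `w`'s flow from `y` to `z` would raise the sorted ratios lexicographically.
  have hyz : y ≠ z := by rintro rfl; exact lt_irrefl _ hlt
  set ε := min (d w y) ((ratio G D d y - ratio G D d z) * D y / 2)
  have hε : 0 < ε := lt_min hwy (half_pos (mul_pos (sub_pos.2 hlt) (hD y)))
  have hεy : ε / D y < ratio G D d y - ratio G D d z := by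
    rw [div_lt_iff₀ (hD y)]
    linarith [min_le_right (d w y) ((ratio G D d y - ratio G D d z) * D y / 2),
      mul_pos (sub_pos.2 hlt) (hD y)]
  have hd' := isAlloc_redirect hopt.1 (hopt.1.adj_of_pos hwy) hz hε.le (min_le_left _ _)
  have hρ := ratio_redirect hopt.1 (hopt.1.adj_of_pos hwy) hz hε.le (min_le_left _ _)
  have hy' : ratio G D d z < ratio G D (redirect d w y z ε) y := by
    simp only [hρ, Pi.sub_apply, Pi.single_eq_same, Pi.single_eq_of_ne hyz, zero_sub, neg_div]
    linarith
  have hz' : ratio G D d z < ratio G D (redirect d w y z ε) z := by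
    simp only [hρ, Pi.sub_apply, Pi.single_eq_same, Pi.single_eq_of_ne hyz.symm, sub_zero]
    linarith [div_pos hε (hD z)]
  refine hopt.2 _ hd' (sort_map_lex_sort_map {y, z} (mem_insert_of_mem (mem_singleton_self z))
    (fun v hv => ?_) (fun v hv => ?_) (fun v hv => ?_))
  · simp only [mem_insert, mem_singleton, not_or] at hv
    simp [hρ, hv.1, hv.2]
  all_goals simp only [mem_insert, mem_singleton] at hv
  · rcases hv with rfl | rfl
    exacts [hlt.le, le_rfl]
  · rcases hv with rfl | rfl
    exacts [hy', hz']

structure IsMinNbrRatio (G : SimpleGraph V) [DecidableRel G.Adj] (D : V → ℝ) (d : V → V → ℝ)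
    (φ : V → ℝ) : Prop where
  ratio_eq_of_pos : ∀ {w y}, 0 < d w y → ratio G D d y = φ w
  le_ratio_of_adj : ∀ {w z}, G.Adj w z → φ w ≤ ratio G D d z

theorem LexOpt.exists_isMinNbrRatio (hopt : LexOpt G D d) (hD : ∀ i, 0 < D i) :
    ∃ φ, IsMinNbrRatio G D d φ := by
  choose τ hτ using hopt.1.exists_pos hD
  refine ⟨fun w => ratio G D d (τ w), fun hwy => ?_, fun hwz => hopt.ratio_le_of_pos hD hwz (hτ _)⟩
  exact (hopt.ratio_le_of_pos hD (hopt.1.adj_of_pos (hτ _)) hwy).antisymm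
    (hopt.ratio_le_of_pos hD (hopt.1.adj_of_pos hwy) (hτ _))

end LexOpt

namespace IsMinNbrRatio

variable [Fintype V] [DecidableEq V] {G : SimpleGraph V} [DecidableRel G.Adj] {D : V → ℝ}
  {d : V → V → ℝ} {φ : V → ℝ}

theorem pos (hφ : IsMinNbrRatio G D d φ) (hA : IsAlloc G D d) (hD : ∀ i, 0 < D i) (w : V) :
    0 < φ w := by
  obtain ⟨y, hwy⟩ := hA.exists_pos hD w
  exact hφ.ratio_eq_of_pos hwy ▸ hA.ratio_pos hD hwy

theorem ratio_mul_le_of_pos (hφ : IsMinNbrRatio G D d φ) (hA : IsAlloc G D d)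
    (hD : ∀ i, 0 < D i) {w x : V} (hwx : 0 < d w x) :
    ratio G D d x * φ x ≤ ratio G D d w * φ w := by
  rw [hφ.ratio_eq_of_pos hwx, mul_comm (ratio G D d w)]
  exact mul_le_mul_of_nonneg_left (hφ.le_ratio_of_adj (hA.adj_of_pos hwx).symm) (hφ.pos hA hD w).le

theorem swap_of_pos_of_isMin (hφ : IsMinNbrRatio G D d φ) (hA : IsAlloc G D d)
    (hD : ∀ i, 0 < D i) {x y : V}
    (hmin : ∀ v, ratio G D d x * φ x ≤ ratio G D d v * φ v) (hxy : 0 < d x y) :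
    ratio G D d y = φ x ∧ φ y = ratio G D d x := by
  have hy := hφ.ratio_eq_of_pos hxy
  refine ⟨hy, (hφ.le_ratio_of_adj (hA.adj_of_pos hxy).symm).antisymm ?_⟩
  have := hmin y
  rw [hy, mul_comm] at this
  exact le_of_mul_le_mul_left this (hy ▸ hA.ratio_pos hD hxy)

theorem swap_of_pos_of_isMax (hφ : IsMinNbrRatio G D d φ) (hA : IsAlloc G D d)
    (hD : ∀ i, 0 < D i) {x y : V}
    (hmax : ∀ v, ratio G D d v * φ v ≤ ratio G D d y * φ y) (hxy : 0 < d x y) :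
    ratio G D d x = φ y ∧ φ x = ratio G D d y := by
  have hx := (hφ.ratio_eq_of_pos hxy).symm
  refine ⟨?_, hx⟩
  have := (hmax x).antisymm (hφ.ratio_mul_le_of_pos hA hD hxy)
  rw [hx, mul_comm] at this
  exact mul_left_cancel₀ (hA.ratio_pos hD hxy).ne' this

theorem one_le_ratio_mul (hφ : IsMinNbrRatio G D d φ) (hA : IsAlloc G D d)
    (hD : ∀ i, 0 < D i) (x : V) : 1 ≤ ratio G D d x * φ x := by
  obtain ⟨x₀, -, hx₀⟩ := univ.exists_min_image (fun v => ratio G D d v * φ v) ⟨x, mem_univ x⟩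
  set r := ratio G D d x₀
  set q := φ x₀
  let P : ℝ → ℝ → Finset V := fun a b => univ.filter fun v => ratio G D d v = a ∧ φ v = b
  have hP : ∀ {a b}, a * b = r * q → ∀ v ∈ P a b, ∀ y, 0 < d v y → y ∈ P b a := by
    intro a b hab v hv y hvy
    simp only [P, mem_filter, mem_univ, true_and] at hv ⊢
    rw [← hv.1, ← hv.2]
    refine hφ.swap_of_pos_of_isMin hA hD (fun u => ?_) hvy
    rw [hv.1, hv.2, hab]
    exact hx₀ u (mem_univ u)
  calc 1 ≤ r * q := hA.one_le_mul_of_sends_into hD (hφ.pos hA hD x₀).le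
          ⟨x₀, by simp [P, r, q]⟩ (fun v hv => (mem_filter.1 hv).2.1)
          (fun v hv => (mem_filter.1 hv).2.1) (hP rfl) (hP (mul_comm q r))
    _ ≤ ratio G D d x * φ x := hx₀ x (mem_univ x)

theorem ratio_mul_le_one (hφ : IsMinNbrRatio G D d φ) (hA : IsAlloc G D d)
    (hD : ∀ i, 0 < D i) (x : V) : ratio G D d x * φ x ≤ 1 := by
  obtain ⟨x₁, -, hx₁⟩ := univ.exists_max_image (fun v => ratio G D d v * φ v) ⟨x, mem_univ x⟩
  set r := ratio G D d x₁
  set q := φ x₁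
  let P : ℝ → ℝ → Finset V := fun a b => univ.filter fun v => ratio G D d v = a ∧ φ v = b
  have hP : ∀ {a b}, a * b = r * q → ∀ v ∈ P a b, ∀ y, 0 < d y v → y ∈ P b a := by
    intro a b hab v hv y hyv
    simp only [P, mem_filter, mem_univ, true_and] at hv ⊢
    rw [← hv.1, ← hv.2]
    refine hφ.swap_of_pos_of_isMax hA hD (fun u => ?_) hyv
    rw [hv.1, hv.2, hab]
    exact hx₁ u (mem_univ u)
  calc ratio G D d x * φ x ≤ r * q := hx₁ x (mem_univ x)
    _ ≤ 1 := hA.mul_le_one_of_receives_from hD (hφ.pos hA hD x₁).le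
          ⟨x₁, by simp [P, r, q]⟩ (fun v hv => (mem_filter.1 hv).2.1)
          (fun v hv => (mem_filter.1 hv).2.1) (hP rfl) (hP (mul_comm q r))

theorem ratio_mul_eq_one (hφ : IsMinNbrRatio G D d φ) (hA : IsAlloc G D d)
    (hD : ∀ i, 0 < D i) (x : V) : ratio G D d x * φ x = 1 :=
  (hφ.ratio_mul_le_one hA hD x).antisymm (hφ.one_le_ratio_mul hA hD x)

theorem minRatio_mul_maxRatio [Nonempty V] (hφ : IsMinNbrRatio G D d φ) (hA : IsAlloc G D d)
    (hD : ∀ i, 0 < D i) : minRatio G D d * maxRatio G D d = 1 := by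
  obtain ⟨a, -, ha⟩ := exists_mem_eq_inf' univ_nonempty (ratio G D d)
  obtain ⟨b, -, hb⟩ := exists_mem_eq_sup' univ_nonempty (ratio G D d)
  obtain ⟨y, hay⟩ := hA.exists_pos hD a
  obtain ⟨z, hbz⟩ := hA.exists_pos hD b
  have hφa : φ a ≤ maxRatio G D d := hφ.ratio_eq_of_pos hay ▸ le_sup' _ (mem_univ y)
  have hφb : minRatio G D d ≤ φ b := hφ.ratio_eq_of_pos hbz ▸ inf'_le _ (mem_univ z)
  have ha1 := hφ.ratio_mul_eq_one hA hD a
  have hb1 := hφ.ratio_mul_eq_one hA hD b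
  rw [← minRatio] at ha
  rw [← maxRatio] at hb
  rw [← ha] at ha1
  rw [← hb] at hb1
  nlinarith [hA.ratio_nonneg hD a, hA.ratio_nonneg hD b]

theorem eq_minRatio_iff [Nonempty V] (hφ : IsMinNbrRatio G D d φ) (hA : IsAlloc G D d)
    (hD : ∀ i, 0 < D i) (w : V) : φ w = minRatio G D d ↔ ratio G D d w = maxRatio G D d := by
  have hw := hφ.ratio_mul_eq_one hA hD w
  have hmM := hφ.minRatio_mul_maxRatio hA hD
  have hMm : 1 = maxRatio G D d * minRatio G D d := by rw [mul_comm, hmM]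
  constructor <;> intro h <;> rw [h] at hw
  · exact mul_right_cancel₀ (left_ne_zero_of_mul_eq_one hmM) (hw.trans hMm)
  · exact mul_left_cancel₀ (right_ne_zero_of_mul_eq_one hmM) (hw.trans hMm)

end IsMinNbrRatio

theorem stmt11_general [Fintype V] [Nonempty V] [DecidableEq V] (G : SimpleGraph V) [DecidableRel G.Adj]
    (D : V → ℝ) (hD : ∀ i, 0 < D i) (d : V → V → ℝ)
    (hopt : LexOpt G D d) :
    ∑ i ∈ minSet G D d, recv G d i = ∑ i ∈ maxSet G D d, D i := by
  obtain ⟨φ, hφ⟩ := hopt.exists_isMinNbrRatio hD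
  have hA := hopt.1
  simp only [minSet, maxSet]
  refine (hA.sum_recv_le_sum fun y hy w hwy => ?_).antisymm
    (hA.sum_le_sum_recv fun w hw y hwy => ?_)
  · simp only [mem_filter, mem_univ, true_and] at hy ⊢
    rw [← hφ.eq_minRatio_iff hA hD, ← hφ.ratio_eq_of_pos hwy, hy]
  · simp only [mem_filter, mem_univ, true_and] at hw ⊢
    rw [hφ.ratio_eq_of_pos hwy, hφ.eq_minRatio_iff hA hD, hw]

theorem stmt11 [Fintype V] [Nonempty V] [DecidableEq V] (G : SimpleGraph V) [DecidableRel G.Adj]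
    (hconn : G.Connected) (D : V → ℝ) (hD : ∀ i, 0 < D i) (d : V → V → ℝ)
    (hopt : LexOpt G D d) (hK : ∃ i j, ratio G D d i ≠ ratio G D d j) :
    ∑ i ∈ minSet G D d, recv G d i = ∑ i ∈ maxSet G D d, D i :=
  stmt11_general G D hD d hopt
end
end
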